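/- arXiv:1503.08625 — 2 statements merged into one kernel-verified Lean document; each statement's English description precedes it below -/
import Mathlib

section
/- Let H be a complex Hilbert space, S_H the unilateral shift on ℓ²(ℕ,H), and S the shift on ℓ²(ℕ). Suppose W₁, W₂ : ℓ²(ℕ) → ℓ²(ℕ,H) are isometries with Wᵢ ∘ S = S_H ∘ Wᵢ, and y₁, y₂ ∈ ℓ²(ℕ) are outer vectors (the closed span of {Sⁿ yᵢ : n ≥ 0} is ℓ²(ℕ)) such that W₁ y₁ = W₂ y₂. Then U := W₂* W₁ is a unitary operator on ℓ²(ℕ) satisfying U S = S U, U y₁ = y₂, and W₂ U = W₁. -/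
noncomputable section

open scoped ENNReal InnerProductSpace

set_option linter.unusedSectionVars false

namespace Shift

variable (H : Type*) [NormedAddCommGroup H] [InnerProductSpace ℂ H]

/-- The underlying function of the unilateral shift: `(shiftFun x) 0 = 0`,
`(shiftFun x) (n+1) = x n`. -/
def shiftFun (x : ℕ → H) : ℕ → H
  | 0 => 0
  | n + 1 => x n

variable {H}

theorem memℓp_shiftFun {x : ℕ → H} (hx : Memℓp x 2) : Memℓp (shiftFun H x) 2 := by
  apply memℓp_gen
  have h2 : (0:ℝ) < (2 : ℝ≥0∞).toReal := by norm_num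
  have hs : Summable fun n : ℕ => ‖x n‖ ^ (2 : ℝ≥0∞).toReal := (memℓp_gen_iff h2).1 hx
  exact (summable_nat_add_iff 1).1 (by simpa [shiftFun] using hs)

theorem tsum_shiftFun (x : ℕ → H) (hx : Memℓp x 2) :
    (∑' n, ‖shiftFun H x n‖ ^ (2 : ℝ≥0∞).toReal) = ∑' n, ‖x n‖ ^ (2 : ℝ≥0∞).toReal := by
  have h2 : (0:ℝ) < (2 : ℝ≥0∞).toReal := by norm_num
  rw [Summable.tsum_eq_zero_add (memℓp_gen_iff h2 |>.1 (memℓp_shiftFun hx))]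
  simp [shiftFun]

variable (H)

/-- The unilateral shift as a linear isometry on `ℓ²(ℕ, H)`. -/
def shiftLi : lp (fun _ : ℕ => H) 2 →ₗᵢ[ℂ] lp (fun _ : ℕ => H) 2 where
  toFun x := ⟨shiftFun H x, memℓp_shiftFun (lp.memℓp x)⟩
  map_add' x y := by
    apply lp.ext
    funext n
    cases n <;> simp [shiftFun, lp.coeFn_add] <;> erw [Pi.add_apply] <;> simp [shiftFun]
  map_smul' c x := by
    apply lp.ext
    funext n
    cases n <;> simp [shiftFun, lp.coeFn_smul]
  norm_map' x := by
    have h2 : (0:ℝ) < (2 : ℝ≥0∞).toReal := by norm_num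
    rw [lp.norm_eq_tsum_rpow h2, lp.norm_eq_tsum_rpow h2]
    congr 1
    exact tsum_shiftFun x (lp.memℓp x)

/-- The unilateral shift `S_H` on `ℓ²(ℕ, H)`, as a continuous linear map:
`(shift H x) 0 = 0` and `(shift H x) (n+1) = x n`. -/
def shift : lp (fun _ : ℕ => H) 2 →L[ℂ] lp (fun _ : ℕ => H) 2 :=
  (shiftLi H).toContinuousLinearMap

variable {H}

/-! An isometry `W` intertwining the shifts has closed range, so when `y` is outer that range is the
closed span of the orbit of `W y`. Hence `W₁ y₁ = W₂ y₂` forces `W₁` and `W₂` to have the same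
range, on which `W₂ W₂*` is the identity; this gives `W₂ U = W₁`, then `U* U = W₁* W₁ = 1`,
symmetrically `U U* = 1`, and `U S = S U` after cancelling the injective `W₂`. -/

open ContinuousLinearMap Submodule

section Intertwining

variable {R M N : Type*} [Semiring R] [TopologicalSpace M] [AddCommMonoid M] [Module R M]
  [TopologicalSpace N] [AddCommMonoid N] [Module R N]

/-- `x` is cyclic (for `T` the shift: outer) exactly when this subspace is `⊤`. -/
def cyclicSubspace [ContinuousAdd M] [ContinuousConstSMul R M] (T : M →L[R] M) (x : M) :
    Submodule R M :=
  (span R (Set.range fun n : ℕ => (T ^ n) x)).topologicalClosure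

theorem pow_apply_of_comp_eq {W : M →L[R] N} {S : M →L[R] M} {T : N →L[R] N}
    (h : W ∘L S = T ∘L W) (n : ℕ) (x : M) : W ((S ^ n) x) = (T ^ n) (W x) := by
  have hsemiconj : Function.Semiconj W S T := DFunLike.congr_fun h
  simp only [FunLike.coe_pow_eq_iterate]
  exact hsemiconj.iterate_right n x

theorem comp_eq_comp_of_comp_eq {W₁ W₂ : M →L[R] N} {U S : M →L[R] M} {T : N →L[R] N}
    (hW₂ : Function.Injective W₂) (hU : W₂ ∘L U = W₁)
    (h₁ : W₁ ∘L S = T ∘L W₁) (h₂ : W₂ ∘L S = T ∘L W₂) : U ∘L S = S ∘L U :=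
  cancel_left hW₂ <| calc
    W₂ ∘L U ∘L S = T ∘L W₂ ∘L U := by rw [← comp_assoc, hU, h₁]
    _ = W₂ ∘L S ∘L U := by rw [← comp_assoc W₂, h₂, comp_assoc]

theorem range_eq_topologicalClosure_span_image [ContinuousAdd M] [ContinuousConstSMul R M]
    [ContinuousAdd N] [ContinuousConstSMul R N]
    {W : M →L[R] N} (hW : IsClosed (Set.range W)) {s : Set M}
    (hs : (span R s).topologicalClosure = ⊤) :
    Set.range W = (span R (W '' s)).topologicalClosure := by
  refine subset_antisymm ?_ ?_
  · calc Set.range W = W '' closure (span R s) := by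
          rw [← topologicalClosure_coe, hs, top_coe, Set.image_univ]
      _ ⊆ closure (W '' span R s) := image_closure_subset_closure_image W.continuous
      _ = (span R (W '' s)).topologicalClosure := by
          rw [topologicalClosure_coe, ← coe_coe, span_image, map_coe]
  · have hspan : span R (W '' s) ≤ LinearMap.range W.toLinearMap := by
      rw [span_le]
      rintro _ ⟨x, -, rfl⟩
      exact ⟨x, rfl⟩
    exact topologicalClosure_minimal _ hspan (by rwa [LinearMap.coe_range])

theorem range_eq_cyclicSubspace [ContinuousAdd M] [ContinuousConstSMul R M]
    [ContinuousAdd N] [ContinuousConstSMul R N]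
    {W : M →L[R] N} {S : M →L[R] M} {T : N →L[R] N} (hW : IsClosed (Set.range W))
    (hWS : W ∘L S = T ∘L W) {y : M} (hy : cyclicSubspace S y = ⊤) :
    Set.range W = cyclicSubspace T (W y) := by
  rw [range_eq_topologicalClosure_span_image hW hy, ← Set.range_comp]
  simp only [Function.comp_def, pow_apply_of_comp_eq hWS]
  rfl

end Intertwining

section Isometry

variable {𝕜 E F : Type*} [RCLike 𝕜] [NormedAddCommGroup E] [InnerProductSpace 𝕜 E]
  [CompleteSpace E] [NormedAddCommGroup F] [InnerProductSpace 𝕜 F] [CompleteSpace F]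

theorem adjoint_apply_apply_of_isometry {W : E →L[𝕜] F} (hW : Isometry W) (x : E) :
    adjoint W (W x) = x := by
  simpa using congr($((isometry_iff_adjoint_comp_self W).1 hW) x)

theorem comp_adjoint_comp_of_range_subset {W₁ W₂ : E →L[𝕜] F} (hW₂ : Isometry W₂)
    (h : Set.range W₁ ⊆ Set.range W₂) : W₂ ∘L (adjoint W₂ ∘L W₁) = W₁ :=
  ext fun x => by
    obtain ⟨z, hz⟩ := h ⟨x, rfl⟩
    simp [← hz, adjoint_apply_apply_of_isometry hW₂]

theorem adjoint_comp_mem_unitary_of_range_eq {W₁ W₂ : E →L[𝕜] F} (hW₁ : Isometry W₁)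
    (hW₂ : Isometry W₂) (h : Set.range W₁ = Set.range W₂) :
    adjoint W₂ ∘L W₁ ∈ unitary (E →L[𝕜] E) := by
  have hstar : star (adjoint W₂ ∘L W₁) = adjoint W₁ ∘L W₂ := by
    rw [star_eq_adjoint, adjoint_comp, adjoint_adjoint]
  rw [Unitary.mem_iff, hstar]
  constructor
  · change adjoint W₁ ∘L (W₂ ∘L (adjoint W₂ ∘L W₁)) = 1
    rw [comp_adjoint_comp_of_range_subset hW₂ h.subset,
      (isometry_iff_adjoint_comp_self W₁).1 hW₁]
  · change adjoint W₂ ∘L (W₁ ∘L (adjoint W₁ ∘L W₂)) = 1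
    rw [comp_adjoint_comp_of_range_subset hW₁ h.superset,
      (isometry_iff_adjoint_comp_self W₂).1 hW₂]

end Isometry

/-- uniqueness of the inner-outer factorization of a vector: if
`W₁ y₁ = W₂ y₂` with `Wᵢ` inner and `yᵢ` outer, then `U = W₂* W₁` is unitary,
commutes with the shift, maps `y₁` to `y₂`, and `W₂ U = W₁`. -/
theorem inner_outer_factorization_of_vector_unique
    {H : Type*} [NormedAddCommGroup H] [InnerProductSpace ℂ H] [CompleteSpace H]
    (W₁ W₂ : lp (fun _ : ℕ => ℂ) 2 →L[ℂ] lp (fun _ : ℕ => H) 2)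
    (hW₁ : Isometry W₁) (hW₂ : Isometry W₂)
    (hW₁S : W₁.comp (shift ℂ) = (shift H).comp W₁)
    (hW₂S : W₂.comp (shift ℂ) = (shift H).comp W₂)
    (y₁ y₂ : lp (fun _ : ℕ => ℂ) 2)
    (hy₁ : (Submodule.span ℂ (Set.range fun n : ℕ => (shift ℂ ^ n) y₁)).topologicalClosure = ⊤)
    (hy₂ : (Submodule.span ℂ (Set.range fun n : ℕ => (shift ℂ ^ n) y₂)).topologicalClosure = ⊤)
    (hfac : W₁ y₁ = W₂ y₂) :
    (ContinuousLinearMap.adjoint W₂).comp W₁ ∈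
        unitary (lp (fun _ : ℕ => ℂ) 2 →L[ℂ] lp (fun _ : ℕ => ℂ) 2) ∧
    ((ContinuousLinearMap.adjoint W₂).comp W₁).comp (shift ℂ) =
        (shift ℂ).comp ((ContinuousLinearMap.adjoint W₂).comp W₁) ∧
    ((ContinuousLinearMap.adjoint W₂).comp W₁) y₁ = y₂ ∧
    W₂.comp ((ContinuousLinearMap.adjoint W₂).comp W₁) = W₁ := by
  have hrange : Set.range W₁ = Set.range W₂ := by
    rw [range_eq_cyclicSubspace hW₁.isClosedEmbedding.isClosed_range hW₁S hy₁,
      range_eq_cyclicSubspace hW₂.isClosedEmbedding.isClosed_range hW₂S hy₂, hfac]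
  have hW₂U := comp_adjoint_comp_of_range_subset hW₂ hrange.subset
  refine ⟨adjoint_comp_mem_unitary_of_range_eq hW₁ hW₂ hrange,
    comp_eq_comp_of_comp_eq hW₂.injective hW₂U hW₁S hW₂S, ?_, hW₂U⟩
  rw [comp_apply, hfac, adjoint_apply_apply_of_isometry hW₂]

end Shift
end
end

section
/- Let H be a separable complex Hilbert space and S_H the unilateral shift on ℓ²(ℕ,H). For every nonzero T ∈ B(ℓ²(ℕ,H)) commuting with S_H there exist a separable complex Hilbert space K, an isometry W : ℓ²(ℕ,K) → ℓ²(ℕ,H) with W ∘ S_K = S_H ∘ W whose range equals the closure of the range of T, and an operator Y : ℓ²(ℕ,H) → ℓ²(ℕ,K) with dense range satisfying Y ∘ S_H = S_K ∘ Y, such that T = W ∘ Y. -/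
noncomputable section

open scoped ENNReal InnerProductSpace

set_option linter.unusedSectionVars false

namespace Shift

variable (H : Type*) [NormedAddCommGroup H] [InnerProductSpace ℂ H]

variable {H}

variable (H)

variable {H}

/-! The closure `M` of the range of `T` is invariant under the shift `S`, and `S` restricted to
`M` is a pure isometry: `⋂ₙ Sⁿ M = 0`. By the Wold decomposition, `M` is then the orthogonal
sum of the spaces `Sⁿ L`, where `L = M ⊖ S M` is the wandering subspace, so `M` is unitarily
equivalent to `ℓ²(ℕ, L)` by a unitary `U` carrying the shift of `ℓ²(ℕ, L)` to `S|M`. The inner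
factor is `U` followed by the inclusion of `M`, and the outer factor is `U⁻¹ T`, whose range is
dense because that of `T` is dense in `M`. -/

theorem shift_apply_zero (x : lp (fun _ : ℕ => H) 2) : shift H x 0 = 0 := rfl

theorem shift_apply_succ (x : lp (fun _ : ℕ => H) 2) (n : ℕ) : shift H x (n + 1) = x n := rfl

end Shift

namespace LinearIsometry

variable {𝕜 E K : Type*} [RCLike 𝕜] [NormedAddCommGroup E] [InnerProductSpace 𝕜 E]
  [NormedAddCommGroup K] [InnerProductSpace 𝕜 K]

theorem pow_succ_apply' (V : E →ₗᵢ[𝕜] E) (n : ℕ) (x : E) : (V ^ (n + 1)) x = V ((V ^ n) x) := by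
  simp only [coe_pow, Function.iterate_succ_apply']

theorem pow_add_apply (V : E →ₗᵢ[𝕜] E) (m n : ℕ) (x : E) :
    (V ^ (m + n)) x = (V ^ m) ((V ^ n) x) := by
  simp only [coe_pow, Function.iterate_add_apply]

def restrict (V : E →ₗᵢ[𝕜] E) (M : Submodule 𝕜 E) (hM : ∀ x ∈ M, V x ∈ M) : M →ₗᵢ[𝕜] M where
  toLinearMap := V.toLinearMap.restrict hM
  norm_map' x := V.norm_map x

theorem coe_restrict_pow_apply (V : E →ₗᵢ[𝕜] E) (M : Submodule 𝕜 E) (hM : ∀ x ∈ M, V x ∈ M)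
    (n : ℕ) (x : M) : ((V.restrict M hM ^ n) x : E) = (V ^ n) x := by
  induction n with
  | zero => rfl
  | succ n ih => rw [pow_succ_apply', pow_succ_apply', ← ih]; rfl

theorem iInf_range_restrict_pow_eq_bot (V : E →ₗᵢ[𝕜] E) (M : Submodule 𝕜 E)
    (hM : ∀ x ∈ M, V x ∈ M) (hV : ⨅ n, LinearMap.range (V ^ n).toLinearMap = ⊥) :
    ⨅ n, LinearMap.range (V.restrict M hM ^ n).toLinearMap = ⊥ := by
  refine eq_bot_iff.2 fun x hx => ?_
  suffices (x : E) ∈ ⨅ n, LinearMap.range (V ^ n).toLinearMap by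
    rw [hV] at this
    exact (Submodule.mk_eq_zero M x.2).2 this
  refine (Submodule.mem_iInf _).2 fun n => ?_
  obtain ⟨y, rfl⟩ := (Submodule.mem_iInf _).1 hx n
  exact ⟨y, (coe_restrict_pow_apply V M hM n y).symm⟩

theorem orthogonal_orthogonal_range [CompleteSpace E] (V : E →ₗᵢ[𝕜] E) :
    (LinearMap.range V.toLinearMap)ᗮᗮ = LinearMap.range V.toLinearMap :=
  have : CompleteSpace (LinearMap.range V.toLinearMap) :=
    V.isometry.isUniformInducing.isComplete_range.completeSpace_coe
  Submodule.orthogonal_orthogonal _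

theorem orthogonalFamily_pow_comp (V : E →ₗᵢ[𝕜] E) (J : K →ₗᵢ[𝕜] E)
    (hJ : LinearMap.range J.toLinearMap ≤ (LinearMap.range V.toLinearMap)ᗮ) :
    OrthogonalFamily 𝕜 (fun _ : ℕ => K) fun n => (V ^ n).comp J := by
  have key : ∀ i d : ℕ, ∀ a b : K, ⟪(V ^ i) (J a), (V ^ (i + (d + 1))) (J b)⟫_𝕜 = 0 := by
    intro i d a b
    rw [pow_add_apply, inner_map_map, pow_succ_apply']
    exact Submodule.inner_left_of_mem_orthogonal (LinearMap.mem_range_self _ _)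
      (hJ (LinearMap.mem_range_self _ _))
  intro i j hij a b
  obtain h | h := hij.lt_or_gt
  · obtain ⟨d, rfl⟩ := Nat.exists_eq_add_of_lt h
    exact key i d a b
  · obtain ⟨d, rfl⟩ := Nat.exists_eq_add_of_lt h
    exact inner_eq_zero_symm.1 (key j d b a)

theorem topologicalClosure_iSup_range_pow_comp_eq_top [CompleteSpace E] (V : E →ₗᵢ[𝕜] E)
    (J : K →ₗᵢ[𝕜] E) (hJ : (LinearMap.range V.toLinearMap)ᗮ ≤ LinearMap.range J.toLinearMap)
    (hV : ⨅ n, LinearMap.range (V ^ n).toLinearMap = ⊥) :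
    (⨆ n, LinearMap.range ((V ^ n).comp J).toLinearMap).topologicalClosure = ⊤ := by
  rw [Submodule.topologicalClosure_eq_top_iff, eq_bot_iff]
  intro x hx
  have hperp : ∀ n a, ⟪(V ^ n) (J a), x⟫_𝕜 = 0 := fun n a =>
    (Submodule.mem_orthogonal _ x).1 hx _ (Submodule.mem_iSup_of_mem n ⟨a, rfl⟩)
  -- `x ⊥ Vⁿ (J K)` and `(range V)ᗮᗮ = range V` push `x` into every `range Vⁿ`.
  rw [← hV, Submodule.mem_iInf]
  intro n
  induction n with
  | zero => exact ⟨x, rfl⟩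
  | succ n ih =>
    obtain ⟨u, rfl⟩ := ih
    have hu : u ∈ (LinearMap.range V.toLinearMap)ᗮᗮ := by
      refine (Submodule.mem_orthogonal _ u).2 fun w hw => ?_
      obtain ⟨a, rfl⟩ := hJ hw
      simpa only [coe_toLinearMap, inner_map_map] using hperp n a
    rw [orthogonal_orthogonal_range] at hu
    obtain ⟨v, rfl⟩ := hu
    exact ⟨v, by simp only [coe_toLinearMap, coe_pow, Function.iterate_succ_apply]⟩

theorem isHilbertSum_pow_comp [CompleteSpace E] [CompleteSpace K] (V : E →ₗᵢ[𝕜] E)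
    (J : K →ₗᵢ[𝕜] E) (hJ : LinearMap.range J.toLinearMap = (LinearMap.range V.toLinearMap)ᗮ)
    (hV : ⨅ n, LinearMap.range (V ^ n).toLinearMap = ⊥) :
    IsHilbertSum 𝕜 (fun _ : ℕ => K) fun n => (V ^ n).comp J :=
  IsHilbertSum.mk (V.orthogonalFamily_pow_comp J hJ.le)
    (V.topologicalClosure_iSup_range_pow_comp_eq_top J hJ.ge hV).ge

end LinearIsometry

open TopologicalSpace

theorem lp.separableSpace {α : Type*} {E : α → Type*} [Countable α]
    [∀ i, NormedAddCommGroup (E i)] [∀ i, SeparableSpace (E i)] {p : ℝ≥0∞} [Fact (1 ≤ p)]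
    (hp : p ≠ ⊤) : SeparableSpace (lp E p) := by
  classical
  have hsep : IsSeparable (⋃ i, Set.range (lp.single (E := E) p i)) :=
    .iUnion fun i => isSeparable_range (lp.isometry_single i).continuous
  refine isSeparable_univ_iff.1 ((hsep.span (R := ℕ)).closure.mono fun f _ => ?_)
  refine mem_closure_of_tendsto (lp.hasSum_single hp f) (.of_forall fun s => ?_)
  exact Submodule.sum_mem _ fun i _ => Submodule.subset_span (Set.mem_iUnion.2 ⟨i, f i, rfl⟩)

theorem Orthonormal.countable {𝕜 E ι : Type*} [RCLike 𝕜] [NormedAddCommGroup E]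
    [InnerProductSpace 𝕜 E] [SeparableSpace E] {v : ι → E} (hv : Orthonormal 𝕜 v) :
    Countable ι := by
  have hdist : ∀ i j, i ≠ j → 1 ≤ dist (v i) (v j) := by
    intro i j hij
    have hsq : dist (v i) (v j) ^ 2 = 2 := by
      rw [dist_eq_norm, @norm_sub_sq 𝕜, hv.1, hv.1, hv.2 hij]
      norm_num
    nlinarith [dist_nonneg (x := v i) (y := v j)]
  refine Pairwise.countable_of_isOpen_disjoint (s := fun i => Metric.ball (v i) (1 / 2))
    (fun i j hij => Metric.ball_disjoint_ball ?_) (fun _ => Metric.isOpen_ball)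
    (fun i => ⟨v i, Metric.mem_ball_self (by norm_num)⟩)
  linarith [hdist i j hij]

/-- Indexing the Hilbert basis by a subset of `ℕ` puts the model space in `Type`. -/
theorem exists_linearIsometryEquiv_lp_subtype_nat (𝕜 E : Type*) [RCLike 𝕜]
    [NormedAddCommGroup E] [InnerProductSpace 𝕜 E] [CompleteSpace E] [SeparableSpace E] :
    ∃ s : Set ℕ, Nonempty (E ≃ₗᵢ[𝕜] lp (fun _ : s => 𝕜) 2) := by
  obtain ⟨w, b, -⟩ := exists_hilbertBasis 𝕜 E
  have := b.orthonormal.countable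
  obtain ⟨g, hg⟩ := Countable.exists_injective_nat w
  let e := Equiv.ofInjective g hg
  have hv : Orthonormal 𝕜 (b ∘ e.symm) := b.orthonormal.comp _ e.symm.injective
  have hsp : ⊤ ≤ (Submodule.span 𝕜 (Set.range (b ∘ e.symm))).topologicalClosure := by
    rw [EquivLike.range_comp, b.dense_span]
  exact ⟨Set.range g, ⟨(HilbertBasis.mk hv hsp).repr⟩⟩

theorem ContinuousLinearMap.mem_topologicalClosure_range_of_comm {𝕜 E : Type*} [Semiring 𝕜]
    [AddCommMonoid E] [Module 𝕜 E] [TopologicalSpace E] [ContinuousAdd E]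
    [ContinuousConstSMul 𝕜 E] {S T : E →L[𝕜] E} (hST : T.comp S = S.comp T) {x : E}
    (hx : x ∈ (LinearMap.range (T : E →ₗ[𝕜] E)).topologicalClosure) :
    S x ∈ (LinearMap.range (T : E →ₗ[𝕜] E)).topologicalClosure := by
  refine map_mem_closure S.continuous hx ?_
  rintro _ ⟨y, rfl⟩
  exact ⟨S y, congrArg (· y) hST⟩

namespace Shift

variable {H : Type*} [NormedAddCommGroup H] [InnerProductSpace ℂ H]

local notation "ℓ²(" H ")" => lp (fun _ : ℕ => H) 2

theorem shiftLi_pow_apply_of_lt (x : ℓ²(H)) {n j : ℕ} (hj : j < n) :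
    (shiftLi H ^ n) x j = 0 := by
  induction n generalizing j with
  | zero => omega
  | succ n ih =>
    rw [LinearIsometry.pow_succ_apply']
    cases j with
    | zero => rfl
    | succ j => exact ih (by omega)

theorem iInf_range_shiftLi_pow :
    ⨅ n, LinearMap.range (shiftLi H ^ n).toLinearMap = ⊥ := by
  refine eq_bot_iff.2 fun x hx => lp.ext (funext fun j => ?_)
  obtain ⟨y, rfl⟩ := (Submodule.mem_iInf _).1 hx (j + 1)
  exact shiftLi_pow_apply_of_lt y (Nat.lt_succ_self j)

theorem _root_.IsHilbertSum.linearIsometryEquiv_symm_shift {E K : Type*} [NormedAddCommGroup E]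
    [InnerProductSpace ℂ E] [CompleteSpace E] [NormedAddCommGroup K] [InnerProductSpace ℂ K]
    {V : E →ₗᵢ[ℂ] E} {J : K →ₗᵢ[ℂ] E}
    (hW : IsHilbertSum ℂ (fun _ : ℕ => K) fun n => (V ^ n).comp J) (y : ℓ²(K)) :
    hW.linearIsometryEquiv.symm (shift K y) = V (hW.linearIsometryEquiv.symm y) := by
  -- both sides are `∑ₙ Vⁿ⁺¹ (J (y n))`
  refine (hW.hasSum_linearIsometryEquiv_symm (shift K y)).unique ?_
  rw [← hasSum_nat_add_iff' 1]
  simpa [shift_apply_zero, shift_apply_succ, LinearIsometry.pow_succ_apply'] using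
    (hW.hasSum_linearIsometryEquiv_symm y).mapL V.toContinuousLinearMap

theorem exists_inner_outer_of_linearIsometryEquiv {K : Type*} [NormedAddCommGroup K]
    [InnerProductSpace ℂ K] (T : ℓ²(H) →L[ℂ] ℓ²(H))
    (hT : T.comp (shift H) = (shift H).comp T)
    (U : ℓ²(K) ≃ₗᵢ[ℂ] (LinearMap.range (T : ℓ²(H) →ₗ[ℂ] ℓ²(H))).topologicalClosure)
    (hU : ∀ y, (U (shift K y) : ℓ²(H)) = shift H (U y)) :
    ∃ (W : ℓ²(K) →L[ℂ] ℓ²(H)) (Y : ℓ²(H) →L[ℂ] ℓ²(K)),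
      Isometry W ∧
      W.comp (shift K) = (shift H).comp W ∧
      LinearMap.range (W : ℓ²(K) →ₗ[ℂ] ℓ²(H)) =
        (LinearMap.range (T : ℓ²(H) →ₗ[ℂ] ℓ²(H))).topologicalClosure ∧
      DenseRange ⇑Y ∧
      Y.comp (shift H) = (shift K).comp Y ∧
      T = W.comp Y := by
  let M := (LinearMap.range (T : ℓ²(H) →ₗ[ℂ] ℓ²(H))).topologicalClosure
  have hTM : ∀ x, T x ∈ M := fun x =>
    Submodule.le_topologicalClosure _ (LinearMap.mem_range.2 ⟨x, rfl⟩)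
  let W := M.subtypeL.comp (U.toContinuousLinearEquiv : ℓ²(K) →L[ℂ] M)
  let Y := (U.symm.toContinuousLinearEquiv : M →L[ℂ] ℓ²(K)).comp (T.codRestrict M hTM)
  have hW : Isometry W := isometry_subtype_coe.comp U.isometry
  have hWY : ∀ x, W (Y x) = T x := fun x => by simp [W, Y]
  have hWS : W.comp (shift K) = (shift H).comp W := ContinuousLinearMap.ext hU
  refine ⟨W, Y, hW, hWS, ?_, ?_, ?_, ContinuousLinearMap.ext fun x => (hWY x).symm⟩
  · exact (LinearMap.range_comp_of_range_eq_top _ U.toLinearEquiv.range).trans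
      (Submodule.range_subtype M)
  · have hdense : DenseRange (T.codRestrict M hTM) := by
      refine Topology.IsInducing.subtypeVal.dense_iff.2 fun x => ?_
      rw [← Set.range_comp]
      exact x.2
    exact U.symm.surjective.denseRange.comp hdense U.symm.continuous
  · ext1 x
    apply hW.injective
    calc W (Y (shift H x)) = T (shift H x) := hWY _
      _ = shift H (T x) := congrArg (· x) hT
      _ = shift H (W (Y x)) := by rw [hWY]
      _ = W (shift K (Y x)) := (hU (Y x)).symm

theorem inner_outer_factorization_of_commutant_general
    {H : Type*} [NormedAddCommGroup H] [InnerProductSpace ℂ H] [CompleteSpace H]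
    [TopologicalSpace.SeparableSpace H]
    (T : lp (fun _ : ℕ => H) 2 →L[ℂ] lp (fun _ : ℕ => H) 2)
    (hT : T.comp (shift H) = (shift H).comp T) :
    ∃ (K : Type) (_ : NormedAddCommGroup K) (_ : InnerProductSpace ℂ K),
      CompleteSpace K ∧ TopologicalSpace.SeparableSpace K ∧
      ∃ (W : lp (fun _ : ℕ => K) 2 →L[ℂ] lp (fun _ : ℕ => H) 2)
        (Y : lp (fun _ : ℕ => H) 2 →L[ℂ] lp (fun _ : ℕ => K) 2),
        Isometry W ∧
        W.comp (shift K) = (shift H).comp W ∧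
        LinearMap.range (W : lp (fun _ : ℕ => K) 2 →ₗ[ℂ] lp (fun _ : ℕ => H) 2) = (LinearMap.range (T : lp (fun _ : ℕ => H) 2 →ₗ[ℂ] lp (fun _ : ℕ => H) 2)).topologicalClosure ∧
        DenseRange ⇑Y ∧
        Y.comp (shift H) = (shift K).comp Y ∧
        T = W.comp Y := by
  let M := (LinearMap.range (T : ℓ²(H) →ₗ[ℂ] ℓ²(H))).topologicalClosure
  have : SeparableSpace ℓ²(H) := lp.separableSpace (by norm_num)
  have hSM : ∀ x ∈ M, shiftLi H x ∈ M := fun _ => (shift H).mem_topologicalClosure_range_of_comm hT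
  let V := (shiftLi H).restrict M hSM
  let L := (LinearMap.range V.toLinearMap)ᗮ
  obtain ⟨s, ⟨e⟩⟩ := exists_linearIsometryEquiv_lp_subtype_nat ℂ L
  let J := L.subtypeₗᵢ.comp e.symm.toLinearIsometry
  have hJ : LinearMap.range J.toLinearMap = L :=
    (LinearMap.range_comp_of_range_eq_top _ e.symm.toLinearEquiv.range).trans
      (Submodule.range_subtype L)
  have hW := V.isHilbertSum_pow_comp J hJ
    ((shiftLi H).iInf_range_restrict_pow_eq_bot M hSM iInf_range_shiftLi_pow)
  refine ⟨lp (fun _ : s => ℂ) 2, _, _, inferInstance,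
    e.surjective.denseRange.separableSpace e.continuous,
    exists_inner_outer_of_linearIsometryEquiv T hT hW.linearIsometryEquiv.symm fun y => ?_⟩
  exact congrArg Subtype.val (hW.linearIsometryEquiv_symm_shift y)

/-- inner-outer factorization of a nonzero operator commuting with the
shift on `ℓ²(ℕ,H)`, `H` separable: `T = W ∘ Y` with `W` inner (range = closure of range of `T`)
and `Y` outer. -/
theorem inner_outer_factorization_of_commutant
    {H : Type*} [NormedAddCommGroup H] [InnerProductSpace ℂ H] [CompleteSpace H]
    [TopologicalSpace.SeparableSpace H]
    (T : lp (fun _ : ℕ => H) 2 →L[ℂ] lp (fun _ : ℕ => H) 2)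
    (hT0 : T ≠ 0)
    (hT : T.comp (shift H) = (shift H).comp T) :
    ∃ (K : Type) (_ : NormedAddCommGroup K) (_ : InnerProductSpace ℂ K),
      CompleteSpace K ∧ TopologicalSpace.SeparableSpace K ∧
      ∃ (W : lp (fun _ : ℕ => K) 2 →L[ℂ] lp (fun _ : ℕ => H) 2)
        (Y : lp (fun _ : ℕ => H) 2 →L[ℂ] lp (fun _ : ℕ => K) 2),
        Isometry W ∧
        W.comp (shift K) = (shift H).comp W ∧
        LinearMap.range (W : lp (fun _ : ℕ => K) 2 →ₗ[ℂ] lp (fun _ : ℕ => H) 2) = (LinearMap.range (T : lp (fun _ : ℕ => H) 2 →ₗ[ℂ] lp (fun _ : ℕ => H) 2)).topologicalClosure ∧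
        DenseRange ⇑Y ∧
        Y.comp (shift H) = (shift K).comp Y ∧
        T = W.comp Y :=
  inner_outer_factorization_of_commutant_general T hT

end Shift
end
end
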